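/- arXiv:math/0502333 — 5 statements merged into one kernel-verified Lean document; each statement's English description precedes it below -/
import Mathlib

section
/- Let q be a real number with 0 < q < 1, and for natural numbers N define [N] = (1-q^N)/(1-q). For any natural numbers a, d ≥ 1, N ≥ 1 and prime p, one has q^a/[d p^N] = Σ_{i=0}^{p-1} q^{a + i d p^N} / [d p^{N+1}]. In other words, the assignment μ_q(a + dp^N Z_p) = q^a/[dp^N] satisfies the distribution (compatibility) property. -/
/-! Writing `x = q ^ m`, the geometric sum `1 - x ^ k = (1 - x) * ∑_{i<k} x ^ i` gives
`[m k] = [m] * ∑_{i<k} q ^ (i m)`, and the numerators `q ^ (a + i m)` sum to `q ^ a` times the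
same factor, which cancels. -/

open Finset

theorem qNat_mul_eq_mul_geom_sum {K : Type*} [Field K] (q : K) (m k : ℕ) :
    (1 - q ^ (m * k)) / (1 - q) = (1 - q ^ m) / (1 - q) * ∑ i ∈ range k, (q ^ m) ^ i := by
  rw [pow_mul, ← mul_neg_geom_sum, mul_div_right_comm]

theorem div_qNat_eq_sum_div_qNat_mul {K : Type*} [Field K] (q : K) (a m k : ℕ)
    (hk : ∑ i ∈ range k, (q ^ m) ^ i ≠ 0) :
    q ^ a / ((1 - q ^ m) / (1 - q)) =
      ∑ i ∈ range k, q ^ (a + i * m) / ((1 - q ^ (m * k)) / (1 - q)) := by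
  have hnum : ∑ i ∈ range k, q ^ (a + i * m) = q ^ a * ∑ i ∈ range k, (q ^ m) ^ i := by
    simp only [mul_sum, pow_add, ← pow_mul, mul_comm]
  rw [← sum_div, hnum, qNat_mul_eq_mul_geom_sum, mul_div_mul_right _ _ hk]

theorem mu_q_distribution_general (q : ℝ) (hq0 : 0 < q)
    (p : ℕ) (hp : p.Prime) (a d N : ℕ) :
    q ^ a / ((1 - q ^ (d * p ^ N)) / (1 - q)) =
      ∑ i ∈ Finset.range p,
        q ^ (a + i * d * p ^ N) / ((1 - q ^ (d * p ^ (N + 1))) / (1 - q)) := by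
  have hsum : ∑ i ∈ range p, (q ^ (d * p ^ N)) ^ i ≠ 0 :=
    (geom_sum_pos (by positivity) hp.ne_zero).ne'
  simpa only [pow_succ, mul_assoc] using div_qNat_eq_sum_div_qNat_mul q a (d * p ^ N) p hsum

theorem mu_q_distribution (q : ℝ) (hq0 : 0 < q) (hq1 : q < 1)
    (p : ℕ) (hp : p.Prime) (a d N : ℕ) (hd : 1 ≤ d) (hN : 1 ≤ N) :
    q ^ a / ((1 - q ^ (d * p ^ N)) / (1 - q)) =
      ∑ i ∈ Finset.range p,
        q ^ (a + i * d * p ^ N) / ((1 - q ^ (d * p ^ (N + 1))) / (1 - q)) :=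
  mu_q_distribution_general q hq0 p hp a d N
end

section
/- Let p be a prime, q ∈ Z_p (the p-adic integers) with |q - 1|_p < p^{-1/(p-1)} and q ≠ 1, and let [x] = (1-q^x)/(1-q). Then for every natural number m, the Riemann sums (1/[p^N]) Σ_{x=0}^{p^N - 1} q^x [x]^m converge p-adically as N → ∞ to (1/(1-q)^m) Σ_{i=0}^{m} C(m,i) (-1)^i (i+1)/[i+1]. -/
/-!
Expanding `[x]^m` binomially turns the Riemann sum into a combination of geometric sums in
`q^(i+1)`; with `w = q^(p^N)`, each of them divided by `[p^N]` equals `(1 + w + ⋯ + w^i) / [i+1]`.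
So the Riemann sum is a fixed polynomial in `w`, and it suffices that `w → 1`. This, and the
nonvanishing of the denominators `1 - q^n`, both follow from `|q^n - 1| = |n| |q - 1|`, valid once
`|q - 1| < p^(-1/(p-1))`: for `p ∤ n` the factor `1 + q + ⋯ + q^(n-1)` is a unit, and for `n = p`
the linear term `p (q - 1)` dominates the binomial expansion of `q^p - 1`.
-/

open Filter Finset

lemma add_one_pow_sub_one_eq {R : Type*} [CommRing R] (t : R) {n : ℕ} (hn : n ≠ 0) :
    (t + 1) ^ n - 1 = n * t + ∑ k ∈ Ico 2 (n + 1), t ^ k * (n.choose k : R) := by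
  rw [add_pow, range_eq_Ico, sum_eq_sum_Ico_succ_bot (by omega),
    sum_eq_sum_Ico_succ_bot (by omega)]
  simp only [zero_add, pow_zero, pow_one, one_pow, mul_one, Nat.choose_zero_right,
    Nat.choose_one_right, Nat.cast_one]
  ring

namespace Padic

variable {p : ℕ} [hp : Fact p.Prime] {u : ℚ_[p]}

lemma norm_sub_one_pow_pred_lt (hu : ‖u - 1‖ < (p : ℝ) ^ (-(1 : ℝ) / (p - 1))) :
    ‖u - 1‖ ^ (p - 1) < (p : ℝ)⁻¹ := by
  have hp1 : (1 : ℝ) < p := mod_cast hp.out.one_lt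
  have hcast : ((p - 1 : ℕ) : ℝ) = p - 1 := by rw [Nat.cast_sub hp.out.one_le, Nat.cast_one]
  calc ‖u - 1‖ ^ (p - 1) < ((p : ℝ) ^ (-(1 : ℝ) / (p - 1))) ^ (p - 1) :=
        pow_lt_pow_left₀ hu (norm_nonneg _) (by have := hp.out.two_le; omega)
    _ = (p : ℝ)⁻¹ := by
        rw [← Real.rpow_natCast, ← Real.rpow_mul (by positivity), hcast,
          div_mul_cancel₀ _ (by linarith), Real.rpow_neg_one]

lemma norm_sub_one_lt_one (hu : ‖u - 1‖ ^ (p - 1) < (p : ℝ)⁻¹) : ‖u - 1‖ < 1 :=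
  (pow_lt_one_iff_of_nonneg (norm_nonneg _) (Nat.sub_ne_zero_of_lt hp.out.one_lt)).mp
    (hu.trans (inv_lt_one_of_one_lt₀ (mod_cast hp.out.one_lt)))

lemma norm_le_one_of_norm_sub_one_lt_one (hu : ‖u - 1‖ < 1) : ‖u‖ ≤ 1 := by
  simpa using IsUltrametricDist.norm_add_le_max (u - 1) 1 |>.trans (max_le hu.le norm_one.le)

lemma norm_pow_sub_one_le (hu : ‖u‖ ≤ 1) (n : ℕ) : ‖u ^ n - 1‖ ≤ ‖u - 1‖ := by
  rw [← geom_sum_mul, norm_mul]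
  refine mul_le_of_le_one_left (norm_nonneg _) ?_
  exact IsUltrametricDist.norm_sum_le_of_forall_le_of_nonneg zero_le_one fun i _ => by
    rw [norm_pow]; exact pow_le_one₀ (norm_nonneg u) hu

lemma norm_pow_sub_one_of_not_dvd (hu : ‖u - 1‖ < 1) {k : ℕ} (hk : ¬p ∣ k) :
    ‖u ^ k - 1‖ = ‖u - 1‖ := by
  have hk1 : ‖(k : ℚ_[p])‖ = 1 := norm_natCast_eq_one_iff.mpr (hp.out.coprime_iff_not_dvd.mpr hk)
  have hrest : ‖∑ i ∈ range k, (u ^ i - 1)‖ < ‖(k : ℚ_[p])‖ := by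
    rw [hk1]
    exact (IsUltrametricDist.norm_sum_le_of_forall_le_of_nonneg (norm_nonneg _) fun i _ =>
      norm_pow_sub_one_le (norm_le_one_of_norm_sub_one_lt_one hu) i).trans_lt hu
  have hgeom : ∑ i ∈ range k, u ^ i = k + ∑ i ∈ range k, (u ^ i - 1) := by simp
  rw [← geom_sum_mul, norm_mul, hgeom, IsUltrametricDist.norm_add_eq_max_of_norm_ne_norm
    hrest.ne', max_eq_left hrest.le, hk1, one_mul]

lemma norm_pow_prime_sub_one (hu : ‖u - 1‖ ^ (p - 1) < (p : ℝ)⁻¹) :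
    ‖u ^ p - 1‖ = ‖(p : ℚ_[p])‖ * ‖u - 1‖ := by
  obtain rfl | hu1 := eq_or_ne u 1
  · simp
  set t := u - 1
  have ht0 : 0 < ‖t‖ := norm_pos_iff.mpr (sub_ne_zero.mpr hu1)
  have ht1 : ‖t‖ < 1 := norm_sub_one_lt_one hu
  have hp2 := hp.out.two_le
  have hterm : ∀ k ∈ Ico 2 (p + 1), ‖t ^ k * (p.choose k : ℚ_[p])‖ < ‖(p : ℚ_[p]) * t‖ := by
    intro k hk
    obtain ⟨hk2, hkp⟩ := mem_Ico.mp hk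
    rw [norm_mul, norm_mul, norm_p, norm_pow, mul_comm]
    obtain hkp | hkp := (Nat.lt_succ_iff.mp hkp).eq_or_lt
    · rw [hkp, Nat.choose_self, Nat.cast_one, norm_one, one_mul,
        ← pow_sub_one_mul (by omega : p ≠ 0)]
      exact mul_lt_mul_of_pos_right hu ht0
    · have hchoose : ‖(p.choose k : ℚ_[p])‖ ≤ (p : ℝ)⁻¹ := by
        simpa using (norm_le_pow_iff_norm_lt_pow_add_one _ (-1)).mpr <| by
          simpa using hp.out.dvd_choose_self (by omega) hkp
      calc ‖(p.choose k : ℚ_[p])‖ * ‖t‖ ^ k ≤ (p : ℝ)⁻¹ * ‖t‖ ^ k :=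
            mul_le_mul_of_nonneg_right hchoose (by positivity)
        _ < (p : ℝ)⁻¹ * ‖t‖ :=
            mul_lt_mul_of_pos_left (pow_lt_self_of_lt_one₀ ht0 ht1 (by omega)) (by positivity)
  obtain ⟨k, hk, hsum⟩ := IsUltrametricDist.exists_norm_finsetSum_le_of_nonempty
    (nonempty_Ico.mpr (by omega : 2 < p + 1)) fun k => t ^ k * (p.choose k : ℚ_[p])
  have hlt := hsum.trans_lt (hterm k hk)
  rw [show u = t + 1 by ring, add_one_pow_sub_one_eq t (by omega), add_comm,
    IsUltrametricDist.norm_add_eq_max_of_norm_ne_norm hlt.ne, max_eq_right hlt.le, norm_mul]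

lemma norm_pow_prime_pow_sub_one (hu : ‖u - 1‖ ^ (p - 1) < (p : ℝ)⁻¹) (e : ℕ) :
    ‖u ^ p ^ e - 1‖ = ‖(p : ℚ_[p]) ^ e‖ * ‖u - 1‖ := by
  induction e with
  | zero => simp
  | succ e ih =>
    have hsmall : ‖u ^ p ^ e - 1‖ ^ (p - 1) < (p : ℝ)⁻¹ :=
      (pow_le_pow_left₀ (norm_nonneg _) (norm_pow_sub_one_le
        (norm_le_one_of_norm_sub_one_lt_one (norm_sub_one_lt_one hu)) _) _).trans_lt hu
    rw [pow_succ, pow_mul, norm_pow_prime_sub_one hsmall, ih, pow_succ, norm_mul]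
    ring

theorem norm_pow_sub_one (hu : ‖u - 1‖ ^ (p - 1) < (p : ℝ)⁻¹) (n : ℕ) :
    ‖u ^ n - 1‖ = ‖(n : ℚ_[p])‖ * ‖u - 1‖ := by
  obtain rfl | hn := eq_or_ne n 0
  · simp
  obtain ⟨e, k, hk, rfl⟩ := Nat.exists_eq_pow_mul_and_not_dvd hn p hp.out.ne_one
  have hsmall : ‖u ^ p ^ e - 1‖ < 1 :=
    (norm_pow_sub_one_le (norm_le_one_of_norm_sub_one_lt_one (norm_sub_one_lt_one hu)) _).trans_lt
      (norm_sub_one_lt_one hu)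
  rw [pow_mul, norm_pow_sub_one_of_not_dvd hsmall hk, norm_pow_prime_pow_sub_one hu, Nat.cast_mul,
    Nat.cast_pow, norm_mul _ (k : ℚ_[p]),
    norm_natCast_eq_one_iff.mpr (hp.out.coprime_iff_not_dvd.mpr hk), mul_one]

lemma pow_ne_one_of_ne_one (hu : ‖u - 1‖ ^ (p - 1) < (p : ℝ)⁻¹) (hu1 : u ≠ 1) {n : ℕ}
    (hn : n ≠ 0) : u ^ n ≠ 1 := by
  rw [← sub_ne_zero, ← norm_ne_zero_iff, norm_pow_sub_one hu]
  exact mul_ne_zero (by simpa using hn) (norm_ne_zero_iff.mpr (sub_ne_zero.mpr hu1))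

lemma tendsto_pow_prime_pow (hu : ‖u - 1‖ ^ (p - 1) < (p : ℝ)⁻¹) :
    Tendsto (fun N : ℕ => u ^ p ^ N) atTop (nhds 1) := by
  rw [tendsto_iff_norm_sub_tendsto_zero]
  simp_rw [norm_pow_prime_pow_sub_one hu, norm_pow, norm_p]
  simpa using (tendsto_pow_atTop_nhds_zero_of_lt_one (by positivity)
    (inv_lt_one_of_one_lt₀ (mod_cast hp.out.one_lt : (1 : ℝ) < p))).mul_const ‖u - 1‖

end Padic

section QRiemannSum

variable {K : Type*} [Field K] {z : K}

lemma pow_mul_one_sub_pow_div_pow (z : K) (x m : ℕ) :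
    z ^ x * ((1 - z ^ x) / (1 - z)) ^ m =
      1 / (1 - z) ^ m * ∑ i ∈ range (m + 1), (m.choose i : K) * (-1) ^ i * (z ^ (i + 1)) ^ x := by
  rw [div_pow, sub_eq_neg_add, add_pow, div_eq_mul_one_div, mul_left_comm, sum_mul, mul_sum]
  refine sum_congr rfl fun i _ => ?_
  rw [neg_pow]
  ring

-- both sides are `(1 - z^(n k)) / ((1 - z^n) [k])`
lemma one_sub_div_one_sub_pow_mul_geom_sum {n k : ℕ} (hn : z ^ n ≠ 1) (hk : z ^ k ≠ 1) :
    (1 - z) / (1 - z ^ n) * ∑ x ∈ range n, (z ^ k) ^ x =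
      (∑ j ∈ range k, (z ^ n) ^ j) / ((1 - z ^ k) / (1 - z)) := by
  have hz : z ≠ 1 := by rintro rfl; simp at hk
  have hswap : (1 - z ^ k) * ∑ x ∈ range n, (z ^ k) ^ x =
      (1 - z ^ n) * ∑ j ∈ range k, (z ^ n) ^ j := by
    rw [mul_neg_geom_sum, mul_neg_geom_sum, ← pow_mul, ← pow_mul, mul_comm]
  field_simp [sub_ne_zero.mpr hn.symm, sub_ne_zero.mpr hk.symm, sub_ne_zero.mpr hz.symm]
  linear_combination hswap

lemma q_riemann_sum_pow_eq {n m : ℕ} (hn : z ^ n ≠ 1) (hm : ∀ i ≤ m, z ^ (i + 1) ≠ 1) :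
    (1 - z) / (1 - z ^ n) * ∑ x ∈ range n, z ^ x * ((1 - z ^ x) / (1 - z)) ^ m =
      1 / (1 - z) ^ m * ∑ i ∈ range (m + 1), (m.choose i : K) * (-1) ^ i *
        ((∑ j ∈ range (i + 1), (z ^ n) ^ j) / ((1 - z ^ (i + 1)) / (1 - z))) := by
  simp_rw [pow_mul_one_sub_pow_div_pow, ← mul_sum]
  rw [sum_comm, mul_left_comm, mul_sum]
  refine congrArg _ (sum_congr rfl fun i hi => ?_)
  rw [← mul_sum, mul_left_comm, one_sub_div_one_sub_pow_mul_geom_sum hn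
    (hm i (Nat.lt_succ_iff.mp (mem_range.mp hi)))]

end QRiemannSum

theorem padic_q_integral_xm (p : ℕ) [Fact p.Prime] (q : ℤ_[p])
    (hq : ‖(q : ℚ_[p]) - 1‖ < (p : ℝ) ^ (-(1 : ℝ) / (p - 1))) (hq1 : q ≠ 1) (m : ℕ) :
    Tendsto
      (fun N : ℕ =>
        ((1 - (q : ℚ_[p])) / (1 - (q : ℚ_[p]) ^ (p ^ N))) *
          ∑ x ∈ Finset.range (p ^ N),
            (q : ℚ_[p]) ^ x * ((1 - (q : ℚ_[p]) ^ x) / (1 - (q : ℚ_[p]))) ^ m)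
      atTop
      (nhds ((1 / (1 - (q : ℚ_[p])) ^ m) *
        ∑ i ∈ Finset.range (m + 1),
          (m.choose i : ℚ_[p]) * (-1) ^ i *
            ((i + 1 : ℚ_[p]) / ((1 - (q : ℚ_[p]) ^ (i + 1)) / (1 - (q : ℚ_[p])))))) := by
  set z : ℚ_[p] := (q : ℚ_[p])
  have hz : ‖z - 1‖ ^ (p - 1) < (p : ℝ)⁻¹ := Padic.norm_sub_one_pow_pred_lt hq
  have hzpow {n : ℕ} (hn : n ≠ 0) : z ^ n ≠ 1 :=
    Padic.pow_ne_one_of_ne_one hz (fun h => hq1 (Subtype.ext h)) hn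
  set F : ℚ_[p] → ℚ_[p] := fun w => 1 / (1 - z) ^ m * ∑ i ∈ range (m + 1),
      (m.choose i : ℚ_[p]) * (-1) ^ i * ((∑ j ∈ range (i + 1), w ^ j) / ((1 - z ^ (i + 1)) / (1 - z)))
  have hF : Continuous F := by fun_prop
  have hF1 : F 1 = 1 / (1 - z) ^ m * ∑ i ∈ range (m + 1),
      (m.choose i : ℚ_[p]) * (-1) ^ i * ((i + 1 : ℚ_[p]) / ((1 - z ^ (i + 1)) / (1 - z))) := by
    simp [F]
  rw [← hF1]
  exact ((hF.tendsto 1).comp (Padic.tendsto_pow_prime_pow hz)).congr fun N =>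
    (q_riemann_sum_pow_eq (hzpow (pow_ne_zero N (Fact.out : p.Prime).ne_zero))
      fun i _ => hzpow i.succ_ne_zero).symm
end

section
/- Let q be real with 0 < q < 1, let r ≥ 1, h be integers, and α_1,…,α_r be integers such that jα_l + h - l + 1 ≠ 0 for all 0 ≤ j ≤ n and 1 ≤ l ≤ r. Define β_n^{(h,r)}(q | α_1,…,α_r) = (1/(1-q)^n) Σ_{j=0}^{n} C(n,j) (-1)^j ∏_{l=1}^{r} (jα_l + h - l + 1)/[jα_l + h - l + 1], where [m] = (1-q^m)/(1-q). Then for every natural number m, Σ_{i=0}^{m} C(m,i) (q-1)^i β_i^{(h,r)}(q | α_1,…,α_r) = ∏_{j=1}^{r} (m α_j + h - j + 1)/[m α_j + h - j + 1]. -/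
open Finset

/-- q-integer `[m] = (1-q^m)/(1-q)` for an integer exponent. -/
noncomputable def qint (q : ℝ) (m : ℤ) : ℝ := (1 - q ^ m) / (1 - q)

/-- The extended Changhee q-Bernoulli numbers `β_n^{(h,r)}(q | α_1,…,α_r)`,
with the weights indexed by `l ∈ {0,…,r-1}` representing `α_{l+1}`. -/
noncomputable def changheeBeta (q : ℝ) (h : ℤ) (r : ℕ) (α : ℕ → ℤ) (n : ℕ) : ℝ :=
  (1 / (1 - q) ^ n) *
    ∑ j ∈ Finset.range (n + 1),
      (n.choose j : ℝ) * (-1) ^ j *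
        ∏ l ∈ Finset.range r,
          (((j : ℤ) * α l + h - l : ℤ) : ℝ) / qint q ((j : ℤ) * α l + h - l)

open fwdDiff

/-! Since `(q - 1)^n β_n = (-1)^n Σ_j C(n,j) (-1)^j w(j)` is the `n`-th forward difference of the
weight `w(j) = ∏_l (jα_l + h - l + 1)/[jα_l + h - l + 1]` at `0`, the theorem is the
Gregory–Newton formula `w(m) = Σ_i C(m,i) Δ^i w(0)`. -/

noncomputable def changheeWeight (q : ℝ) (h : ℤ) (r : ℕ) (α : ℕ → ℤ) (j : ℕ) : ℝ :=
  ∏ l ∈ range r, (((j : ℤ) * α l + h - l : ℤ) : ℝ) / qint q ((j : ℤ) * α l + h - l)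

theorem fwdDiff_iter_zero_eq_neg_one_pow_mul_sum {R : Type*} [CommRing R] (f : ℕ → R) (n : ℕ) :
    (Δ_[1])^[n] f 0 = (-1) ^ n * ∑ j ∈ range (n + 1), (n.choose j : R) * (-1) ^ j * f j := by
  rw [fwdDiff_iter_eq_sum_shift, mul_sum]
  refine sum_congr rfl fun j hj => ?_
  have hjn : j ≤ n := Nat.lt_succ_iff.mp (mem_range.mp hj)
  have hsign : (-1 : R) ^ (n - j) = (-1) ^ n * (-1) ^ j := by
    rw [← pow_add, ← Nat.sub_add_cancel hjn, pow_add, pow_add, Nat.sub_add_cancel hjn, mul_assoc,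
      ← pow_add, ← two_mul, pow_mul, neg_one_sq, one_pow, mul_one]
  rw [zsmul_eq_mul, zero_add, nsmul_one, Int.cast_mul, Int.cast_pow, Int.cast_neg, Int.cast_one,
    Int.cast_natCast, Nat.cast_id, hsign]
  ring

theorem changheeBeta_eq_fwdDiff_iter {q : ℝ} (hq : q ≠ 1) (h : ℤ) (r : ℕ) (α : ℕ → ℤ) (n : ℕ) :
    (q - 1) ^ n * changheeBeta q h r α n = (Δ_[1])^[n] (changheeWeight q h r α) 0 := by
  have h1q : 1 - q ≠ 0 := sub_ne_zero.mpr hq.symm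
  have hsign : (q - 1) ^ n * (1 / (1 - q) ^ n) = (-1) ^ n := by
    rw [← neg_sub, neg_eq_neg_one_mul, mul_pow, mul_assoc,
      mul_one_div_cancel (pow_ne_zero n h1q), mul_one]
  rw [fwdDiff_iter_zero_eq_neg_one_pow_mul_sum, changheeBeta, ← mul_assoc, hsign]
  rfl

theorem changhee_inverse_formula_general (q : ℝ) (hq1 : q < 1)
    (h : ℤ) (r : ℕ) (α : ℕ → ℤ) (m : ℕ) :
    ∑ i ∈ Finset.range (m + 1),
        (m.choose i : ℝ) * (q - 1) ^ i * changheeBeta q h r α i =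
      ∏ l ∈ Finset.range r,
        (((m : ℤ) * α l + h - l : ℤ) : ℝ) / qint q ((m : ℤ) * α l + h - l) := by
  calc ∑ i ∈ range (m + 1), (m.choose i : ℝ) * (q - 1) ^ i * changheeBeta q h r α i
      = ∑ i ∈ range (m + 1), m.choose i • (Δ_[1])^[i] (changheeWeight q h r α) 0 := by
        refine sum_congr rfl fun i _ => ?_
        rw [mul_assoc, changheeBeta_eq_fwdDiff_iter hq1.ne, nsmul_eq_mul]
    _ = changheeWeight q h r α (0 + m • 1) := (shift_eq_sum_fwdDiff_iter 1 _ m 0).symm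
    _ = _ := by simp [changheeWeight]

theorem changhee_inverse_formula (q : ℝ) (hq0 : 0 < q) (hq1 : q < 1)
    (h : ℤ) (r : ℕ) (hr : 1 ≤ r) (α : ℕ → ℤ) (m : ℕ)
    (hnz : ∀ j : ℕ, j ≤ m → ∀ l ∈ Finset.range r, (j : ℤ) * α l + h - l ≠ 0) :
    ∑ i ∈ Finset.range (m + 1),
        (m.choose i : ℝ) * (q - 1) ^ i * changheeBeta q h r α i =
      ∏ l ∈ Finset.range r,
        (((m : ℤ) * α l + h - l : ℤ) : ℝ) / qint q ((m : ℤ) * α l + h - l) :=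
  changhee_inverse_formula_general q hq1 h r α m
end

section
/- Let q be real with 0 < q < 1, let d ≥ 1, n ≥ 0, h be integers, α ≥ 1 an integer, and w a rational number ≥ 0, with all relevant q-integers nonzero. Define β_n^{(h,1)}(w, q | α) = (1/(1-q)^n) Σ_{j=0}^{n} C(n,j)(-q^w)^j (jα+h)/[jα+h : q], where [m : q] = (1-q^m)/(1-q) and q^w = exp(w log q). Then β_n^{(h,1)}(w, q | α) = [d : q]^{n-1} Σ_{i=0}^{d-1} q^{ih} β_n^{(h,1)}((w + αi)/d, q^d | α). -/
open Finset

/-- `β_n^{(h,1)}(w, q | α)` at a rational argument `w`, with `q^w` interpreted as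
`exp (w * log q)`, i.e. the real power `q ^ (w : ℝ)`. -/
noncomputable def betaPolyQ (q : ℝ) (h : ℤ) (α : ℤ) (w : ℚ) (n : ℕ) : ℝ :=
  (1 / (1 - q) ^ n) *
    ∑ j ∈ Finset.range (n + 1),
      (n.choose j : ℝ) * (-(q ^ (w : ℝ))) ^ j *
        (((j : ℤ) * α + h : ℤ) : ℝ) / qint q ((j : ℤ) * α + h)

/-!
Expand both sides as sums over `j` and put `m = jα + h`. Since `(q^d)^((w + αi)/d) = q^w q^(αi)`,
the `i`-th summand on the right carries `(-q^w)^j (q^m)^i`, and the geometric sum over `i`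
produces `[d : q^m]`. Computing `[dm : q]` in two ways, `[m : q^d] [d : q] = [m : q] [d : q^m]`,
turns `m / [m : q^d] · [d : q^m]` into `[d : q] · m / [m : q]`, and the leftover factor
`[d : q]^n / (1 - q^d)^n` is `1 / (1 - q)^n`.
-/

theorem qint_mul (q : ℝ) (m d : ℤ) : qint q (m * d) = qint q m * qint (q ^ m) d := by
  by_cases hm : q ^ m = 1
  · simp [qint, zpow_mul, hm]
  · have : (1 : ℝ) - q ^ m ≠ 0 := sub_ne_zero.2 (Ne.symm hm)
    rw [qint, qint, qint, zpow_mul]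
    field_simp

theorem qint_div_qint_pow (q : ℝ) {m : ℤ} {d : ℕ} (hm : qint q m ≠ 0)
    (hdm : qint (q ^ d) m ≠ 0) : qint (q ^ m) d / qint (q ^ d) m = qint q d / qint q m := by
  have h₁ := qint_mul q m d
  have h₂ := qint_mul q d m
  rw [mul_comm, zpow_natCast] at h₂
  rw [div_eq_div_iff hdm hm]
  linear_combination h₂ - h₁

theorem qint_ne_zero {q : ℝ} (hq₀ : 0 ≤ q) (hq₁ : q ≠ 1) {m : ℤ} (hm : m ≠ 0) : qint q m ≠ 0 :=
  div_ne_zero (sub_ne_zero.2 (Ne.symm ((zpow_eq_one_iff_right₀ hq₀ hq₁).not.2 hm)))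
    (sub_ne_zero.2 hq₁.symm)

theorem qint_div_one_sub_zpow {q : ℝ} {m : ℤ} (hm : q ^ m ≠ 1) :
    qint q m / (1 - q ^ m) = 1 / (1 - q) := by
  have : (1 : ℝ) - q ^ m ≠ 0 := sub_ne_zero.2 (Ne.symm hm)
  rw [qint]
  field_simp

theorem qint_zpow_pred_mul_div_one_sub_pow {q : ℝ} (hq₀ : 0 ≤ q) (hq₁ : q ≠ 1) {d : ℕ}
    (hd : d ≠ 0) (n : ℕ) :
    qint q d ^ ((n : ℤ) - 1) * qint q d / (1 - q ^ d) ^ n = 1 / (1 - q) ^ n := by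
  have hd' : (d : ℤ) ≠ 0 := by exact_mod_cast hd
  have hqd : q ^ (d : ℤ) ≠ 1 := (zpow_eq_one_iff_right₀ hq₀ hq₁).not.2 hd'
  rw [zpow_sub_one₀ (qint_ne_zero hq₀ hq₁ hd'), inv_mul_cancel_right₀ (qint_ne_zero hq₀ hq₁ hd'),
    zpow_natCast, ← div_pow, ← zpow_natCast q d, qint_div_one_sub_zpow hqd, one_div_pow]

theorem geom_sum_eq_qint {x : ℝ} (hx : x ≠ 1) (d : ℕ) : ∑ i ∈ range d, x ^ i = qint x d := by
  rw [geom_sum_eq hx, qint, zpow_natCast, ← neg_sub 1 (x ^ d), ← neg_sub 1 x, neg_div_neg_eq]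

theorem pow_rpow_div_natCast {q : ℝ} (hq : 0 < q) {d : ℕ} (hd : d ≠ 0) (w : ℚ) (k : ℤ) :
    (q ^ d) ^ (((w + k) / d : ℚ) : ℝ) = q ^ (w : ℝ) * q ^ k := by
  rw [← Real.rpow_natCast, ← Real.rpow_mul hq.le, ← Real.rpow_intCast, ← Real.rpow_add hq]
  congr 1
  push_cast
  field_simp

theorem sum_range_zpow_mul_neg_rpow_pow {q : ℝ} (hq : 0 < q) {d : ℕ} (hd : d ≠ 0) (w : ℚ)
    (α h : ℤ) (j : ℕ) (hm : q ^ ((j : ℤ) * α + h) ≠ 1) :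
    ∑ i ∈ range d, q ^ ((i : ℤ) * h) * (-((q ^ d) ^ (((w + α * i) / d : ℚ) : ℝ))) ^ j
      = (-q ^ (w : ℝ)) ^ j * qint (q ^ ((j : ℤ) * α + h)) d := by
  rw [← geom_sum_eq_qint hm, mul_sum]
  refine sum_congr rfl fun i _ => ?_
  have hshift := pow_rpow_div_natCast hq hd w (α * i)
  rw [Int.cast_mul, Int.cast_natCast] at hshift
  rw [hshift, ← neg_mul, mul_pow, ← zpow_natCast (q ^ (α * i)), ← zpow_natCast (q ^ _) i,
    ← zpow_mul, ← zpow_mul, mul_left_comm, ← zpow_add₀ hq.ne']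
  congr 2
  ring

theorem changhee_distribution_formula_r1_general (q : ℝ) (hq0 : 0 < q) (hq1 : q < 1)
    (d : ℕ) (hd : 1 ≤ d) (n : ℕ) (h : ℤ) (α : ℤ)
    (w : ℚ)
    (hnz : ∀ j : ℕ, j ≤ n → (j : ℤ) * α + h ≠ 0) :
    betaPolyQ q h α w n =
      qint q d ^ ((n : ℤ) - 1) *
        ∑ i ∈ Finset.range d,
          q ^ ((i : ℤ) * h) * betaPolyQ (q ^ d) h α ((w + α * i) / d) n := by
  have hq₁ : q ≠ 1 := hq1.ne
  have hd₀ : d ≠ 0 := by omega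
  have hqd₁ : q ^ d ≠ 1 := (pow_eq_one_iff_of_nonneg hq0.le hd₀).not.2 hq₁
  simp only [betaPolyQ, mul_sum]
  rw [sum_comm]
  refine sum_congr rfl fun j hj => ?_
  have hm : (j : ℤ) * α + h ≠ 0 := hnz j (Nat.lt_succ_iff.1 (mem_range.1 hj))
  calc _ = qint q d ^ ((n : ℤ) - 1) * qint q d / (1 - q ^ d) ^ n *
        ((n.choose j : ℝ) * (-q ^ (w : ℝ)) ^ j * (((j : ℤ) * α + h : ℤ) : ℝ) /
          qint q ((j : ℤ) * α + h)) := by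
        rw [qint_zpow_pred_mul_div_one_sub_pow hq0.le hq₁ hd₀]
    _ = qint q d ^ ((n : ℤ) - 1) / (1 - q ^ d) ^ n *
        ((n.choose j : ℝ) * (((j : ℤ) * α + h : ℤ) : ℝ) / qint (q ^ d) ((j : ℤ) * α + h)) *
          ((-q ^ (w : ℝ)) ^ j * qint (q ^ ((j : ℤ) * α + h)) d) := by
        have hratio := qint_div_qint_pow q (qint_ne_zero hq0.le hq₁ hm)
          (qint_ne_zero (pow_nonneg hq0.le d) hqd₁ hm)
        linear_combination (-(qint q d ^ ((n : ℤ) - 1) / (1 - q ^ d) ^ n * n.choose j *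
          (((j : ℤ) * α + h : ℤ) : ℝ) * (-q ^ (w : ℝ)) ^ j)) * hratio
    _ = _ := by
        rw [← sum_range_zpow_mul_neg_rpow_pow hq0 hd₀ w α h j
          ((zpow_eq_one_iff_right₀ hq0.le hq₁).not.2 hm), mul_sum]
        exact sum_congr rfl fun i _ => by ring

theorem changhee_distribution_formula_r1 (q : ℝ) (hq0 : 0 < q) (hq1 : q < 1)
    (d : ℕ) (hd : 1 ≤ d) (n : ℕ) (h : ℤ) (α : ℤ) (hα : 1 ≤ α)
    (w : ℚ) (hw : 0 ≤ w)
    (hnz : ∀ j : ℕ, j ≤ n → (j : ℤ) * α + h ≠ 0) :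
    betaPolyQ q h α w n =
      qint q d ^ ((n : ℤ) - 1) *
        ∑ i ∈ Finset.range d,
          q ^ ((i : ℤ) * h) * betaPolyQ (q ^ d) h α ((w + α * i) / d) n :=
  changhee_distribution_formula_r1_general q hq0 hq1 d hd n h α w hnz
end

section
/- Let q be real with 0 < q < 1, h an integer, n, m natural numbers, and α ≥ 1 an integer with jα + h ≠ 0 for 0 ≤ j ≤ n. Define β_n^{(h,1)}(q|α) = (1/(1-q)^n) Σ_{j=0}^{n} C(n,j)(-1)^j (jα+h)/[jα+h]. Then Σ_{i=0}^{m} C(m,i)(q-1)^i β_i^{(h,1)}(q|α) = (mα + h)/[mα + h], provided mα + h ≠ 0. -/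
open Finset

/-- The extended Changhee q-Bernoulli numbers `β_n^{(h,1)}(q | α)`. -/
noncomputable def changheeBeta1 (q : ℝ) (h : ℤ) (α : ℤ) (n : ℕ) : ℝ :=
  (1 / (1 - q) ^ n) *
    ∑ j ∈ Finset.range (n + 1),
      (n.choose j : ℝ) * (-1) ^ j *
        (((j : ℤ) * α + h : ℤ) : ℝ) / qint q ((j : ℤ) * α + h)

/-! Since `(q - 1)ⁿ = (-1)ⁿ (1 - q)ⁿ`, the factor `(q - 1)ⁱ` turns `β_i` into the signed binomial
transform `(-1)ⁱ ∑ⱼ C(i,j) (-1)ʲ f j` of `f j = (jα + h)/[jα + h]`, and this transform is an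
involution: `∑_{j ≤ i ≤ m} C(m,i) C(i,j) (-1)^(i+j) = C(m,j) ∑ₖ C(m-j,k) (-1)ᵏ = δ_{jm}`. -/

theorem sum_range_neg_one_pow_mul_choose {R : Type*} [Ring R] (n : ℕ) :
    ∑ k ∈ range (n + 1), ((-1) ^ k * n.choose k : R) = if n = 0 then 1 else 0 := by
  exact_mod_cast congrArg (Int.cast : ℤ → R) Int.alternating_sum_range_choose

theorem sum_Ico_choose_mul_choose_mul_neg_one_pow {R : Type*} [CommRing R] {j m : ℕ}
    (hjm : j ≤ m) :
    ∑ i ∈ Ico j (m + 1), (m.choose i * i.choose j : R) * (-1) ^ (i + j) =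
      if j = m then 1 else 0 := by
  rw [sum_Ico_eq_sum_range, show m + 1 - j = m - j + 1 by omega]
  calc _ = ∑ k ∈ range (m - j + 1), (m.choose j : R) * ((-1) ^ k * (m - j).choose k) := by
        refine sum_congr rfl fun k _ => ?_
        rw [← Nat.cast_mul, Nat.choose_mul (Nat.le_add_right j k), Nat.add_sub_cancel_left,
          add_right_comm, ← two_mul, pow_add, pow_mul, neg_one_sq, one_pow]
        push_cast
        ring
    _ = _ := by
        rw [← mul_sum, sum_range_neg_one_pow_mul_choose]
        by_cases hj : j = m <;> simp [hj, Nat.sub_eq_zero_iff_le, hjm.lt_of_ne]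

theorem sum_choose_mul_neg_one_pow_mul_sum_choose {R : Type*} [CommRing R] (f : ℕ → R)
    (m : ℕ) :
    ∑ i ∈ range (m + 1), (m.choose i : R) * (-1) ^ i *
      ∑ j ∈ range (i + 1), (i.choose j : R) * (-1) ^ j * f j = f m := by
  calc _ = ∑ i ∈ range (m + 1), ∑ j ∈ range (i + 1),
          (m.choose i * i.choose j : R) * (-1) ^ (i + j) * f j := by
        simp only [mul_sum, pow_add]
        exact sum_congr rfl fun i _ => sum_congr rfl fun j _ => by ring
    _ = ∑ j ∈ range (m + 1),
          (∑ i ∈ Ico j (m + 1), (m.choose i * i.choose j : R) * (-1) ^ (i + j)) * f j := by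
        simp only [range_eq_Ico, sum_mul]
        exact (sum_Ico_Ico_comm 0 (m + 1) _).symm
    _ = ∑ j ∈ range (m + 1), if j = m then f j else 0 := by
        refine sum_congr rfl fun j hj => ?_
        rw [sum_Ico_choose_mul_choose_mul_neg_one_pow (Nat.lt_succ_iff.mp (mem_range.mp hj)),
          ite_mul, one_mul, zero_mul]
    _ = f m := by simp

theorem pow_sub_one_mul_changheeBeta1 {q : ℝ} (hq : q ≠ 1) (h α : ℤ) (n : ℕ) :
    (q - 1) ^ n * changheeBeta1 q h α n =
      (-1) ^ n * ∑ j ∈ range (n + 1), (n.choose j : ℝ) * (-1) ^ j *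
        ((((j : ℤ) * α + h : ℤ) : ℝ) / qint q ((j : ℤ) * α + h)) := by
  have : (1 - q) ^ n ≠ 0 := pow_ne_zero n (sub_ne_zero.mpr hq.symm)
  rw [changheeBeta1, show q - 1 = -1 * (1 - q) by ring, mul_pow]
  simp only [mul_div_assoc]
  field_simp

theorem changhee_inverse_formula_r1_general (q : ℝ) (hq1 : q < 1)
    (h : ℤ) (α : ℤ) (m : ℕ) :
    ∑ i ∈ Finset.range (m + 1),
        (m.choose i : ℝ) * (q - 1) ^ i * changheeBeta1 q h α i =
      (((m : ℤ) * α + h : ℤ) : ℝ) / qint q ((m : ℤ) * α + h) := by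
  rw [← sum_choose_mul_neg_one_pow_mul_sum_choose
    (fun j : ℕ => (((j : ℤ) * α + h : ℤ) : ℝ) / qint q ((j : ℤ) * α + h)) m]
  refine sum_congr rfl fun i _ => ?_
  rw [mul_assoc, pow_sub_one_mul_changheeBeta1 hq1.ne h α, ← mul_assoc]

theorem changhee_inverse_formula_r1 (q : ℝ) (hq0 : 0 < q) (hq1 : q < 1)
    (h : ℤ) (α : ℤ) (hα : 1 ≤ α) (n m : ℕ)
    (hnz : ∀ j : ℕ, j ≤ n → (j : ℤ) * α + h ≠ 0)
    (hm : (m : ℤ) * α + h ≠ 0)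
    (hnz' : ∀ i : ℕ, i ≤ m → ∀ j : ℕ, j ≤ i → (j : ℤ) * α + h ≠ 0) :
    ∑ i ∈ Finset.range (m + 1),
        (m.choose i : ℝ) * (q - 1) ^ i * changheeBeta1 q h α i =
      (((m : ℤ) * α + h : ℤ) : ℝ) / qint q ((m : ℤ) * α + h) :=
  changhee_inverse_formula_r1_general q hq1 h α m
end
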